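/- arXiv:2007.00150 — 2 statements merged into one kernel-verified Lean document; each statement's English description precedes it below -/
import Mathlib

section
/- Under the linear regression model y_i = x_iᵀβ_0 + σ_0 ε_i with ε_i i.i.d. with continuous distribution function G_0 symmetric around 0 and independent of the covariates x_i, and with estimators satisfying β̂ → β_0 and σ̂ → σ_0 > 0 almost surely, the empirical distribution function of the absolute standardized residuals, G_n^+(t) = (1/n) Σ_{i=1}^n 1{ |y_i − x_iᵀβ̂| / σ̂ ≤ t }, satisfies sup_{t≥0} |G_n^+(t) − G_0^+(t)| → 0 almost surely, where G_0^+ is the distribution function of |ε_1|. -/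
open MeasureTheory ProbabilityTheory Filter Set
open scoped Topology InnerProductSpace

/-!
The residual numerators `yᵢ - xᵢᵀβ̂` differ from `σ₀ εᵢ` by at most `‖xᵢ‖ ‖β̂ - β₀‖`. Away from the
few indices where `‖xᵢ‖` is large, this sandwiches the residual empirical distribution function
at `t` between empirical distribution functions of the `|εᵢ|` at nearby rational points, which
converge by the strong law of large numbers, simultaneously for all rationals. Since
`G₀⁺ t = max (G₀ t - G₀ (-t)) 0` is continuous, this gives pointwise convergence everywhere, and
Pólya's argument upgrades pointwise convergence of monotone functions to a continuous limit
into uniform convergence.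
-/

noncomputable def empFreq (C : ℕ → Prop) [DecidablePred C] (n : ℕ) : ℝ :=
  (∑ i ∈ Finset.range n, if C i then 1 else 0) / n

section empFreq

variable {C D E : ℕ → Prop} [DecidablePred C] [DecidablePred D] [DecidablePred E]

lemma empFreq_nonneg (n : ℕ) : 0 ≤ empFreq C n :=
  div_nonneg (Finset.sum_nonneg fun i _ => by split_ifs <;> norm_num) n.cast_nonneg

lemma empFreq_le_one (n : ℕ) : empFreq C n ≤ 1 := by
  refine div_le_one_of_le₀ ?_ n.cast_nonneg
  calc (∑ i ∈ Finset.range n, if C i then (1 : ℝ) else 0)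
      ≤ ∑ _i ∈ Finset.range n, (1 : ℝ) := Finset.sum_le_sum fun i _ => by split_ifs <;> norm_num
    _ = n := by simp

lemma empFreq_le_add (h : ∀ i, C i → D i ∨ E i) (n : ℕ) :
    empFreq C n ≤ empFreq D n + empFreq E n := by
  rw [empFreq, empFreq, empFreq, ← add_div, ← Finset.sum_add_distrib]
  refine div_le_div_of_nonneg_right (Finset.sum_le_sum fun i _ => ?_) n.cast_nonneg
  have := h i
  split_ifs <;> simp_all

lemma empFreq_mono (h : ∀ i, C i → D i) (n : ℕ) : empFreq C n ≤ empFreq D n := by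
  refine div_le_div_of_nonneg_right (Finset.sum_le_sum fun i _ => ?_) n.cast_nonneg
  have := h i
  split_ifs <;> simp_all

end empFreq

theorem ae_tendsto_empFreq_mem {Ω Λ : Type*} [MeasurableSpace Ω] {P : Measure Ω}
    [IsFiniteMeasure P] [MeasurableSpace Λ] {Z : ℕ → Ω → Λ} (hZ : ∀ i, Measurable (Z i))
    (hindep : iIndepFun Z P) (hident : ∀ i, IdentDistrib (Z i) (Z 0) P P)
    {S : Set Λ} [DecidablePred (· ∈ S)] (hS : MeasurableSet S) :
    ∀ᵐ ω ∂P, Tendsto (empFreq fun i => Z i ω ∈ S) atTop (𝓝 (P.real (Z 0 ⁻¹' S))) := by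
  have hf : Measurable (S.indicator (1 : Λ → ℝ)) := measurable_const.indicator hS
  have hind : S.indicator 1 ∘ Z 0 = (Z 0 ⁻¹' S).indicator (1 : Ω → ℝ) := rfl
  have hslln := strong_law_ae_real (fun i => S.indicator 1 ∘ Z i)
    (hind ▸ (integrable_const 1).indicator (hS.preimage (hZ 0)))
    (fun i j hij => (hindep.comp _ fun _ => hf).indepFun hij) (fun i => (hident i).comp hf)
  simp only [hind, integral_indicator_one (hS.preimage (hZ 0))] at hslln
  filter_upwards [hslln] with ω hω
  convert hω using 3 with n
  simp [empFreq, Set.indicator_apply]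

section Perturbation

variable {u v w : ℕ → ℝ} {σ σ₀ δ M : ℝ}

lemma abs_abs_sub_mul_abs_le {x y r : ℝ} (hσ₀ : 0 ≤ σ₀) (hδ : 0 ≤ δ)
    (h : |x - σ₀ * y| ≤ r * δ) (hr : r ≤ M) : |(|x| - σ₀ * |y|)| ≤ M * δ := by
  calc |(|x| - σ₀ * |y|)| = |(|x| - |σ₀ * y|)| := by rw [abs_mul, abs_of_nonneg hσ₀]
    _ ≤ |x - σ₀ * y| := abs_abs_sub_abs_le_abs_sub _ _
    _ ≤ M * δ := h.trans (mul_le_mul_of_nonneg_right hr hδ)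

lemma empFreq_abs_div_le_le_add (hσ : 0 < σ) (hσ₀ : 0 < σ₀) (hδ : 0 ≤ δ)
    (h : ∀ i, |u i - σ₀ * v i| ≤ w i * δ) {t s : ℝ} (hts : σ * t + M * δ ≤ σ₀ * s) (n : ℕ) :
    empFreq (fun i => |u i| / σ ≤ t) n ≤
      empFreq (fun i => |v i| ≤ s) n + empFreq (fun i => M < w i) n := by
  refine empFreq_le_add (fun i hi => or_iff_not_imp_right.2 fun hw => ?_) n
  have := abs_le.1 (abs_abs_sub_mul_abs_le hσ₀.le hδ (h i) (not_lt.1 hw))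
  rw [div_le_iff₀ hσ] at hi
  exact le_of_mul_le_mul_left (by linarith) hσ₀

lemma empFreq_abs_le_le_add (hσ : 0 < σ) (hσ₀ : 0 ≤ σ₀) (hδ : 0 ≤ δ)
    (h : ∀ i, |u i - σ₀ * v i| ≤ w i * δ) {t s : ℝ} (hst : σ₀ * s + M * δ ≤ σ * t) (n : ℕ) :
    empFreq (fun i => |v i| ≤ s) n ≤
      empFreq (fun i => |u i| / σ ≤ t) n + empFreq (fun i => M < w i) n := by
  refine empFreq_le_add (fun i hi => or_iff_not_imp_right.2 fun hw => ?_) n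
  have := abs_le.1 (abs_abs_sub_mul_abs_le hσ₀ hδ (h i) (not_lt.1 hw))
  rw [div_le_iff₀ hσ]
  nlinarith

end Perturbation

lemma Filter.Eventually.exists_rat_lt {p : ℝ → Prop} {t : ℝ} (h : ∀ᶠ s in 𝓝 t, p s) :
    ∃ q : ℚ, (q : ℝ) < t ∧ p q := by
  obtain ⟨ε, hε, hball⟩ := Metric.eventually_nhds_iff.1 h
  obtain ⟨q, hq₁, hq₂⟩ := exists_rat_btwn (sub_lt_self t hε)
  exact ⟨q, hq₂, hball (by rw [Real.dist_eq, abs_lt]; constructor <;> linarith)⟩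

lemma Filter.Eventually.exists_rat_gt {p : ℝ → Prop} {t : ℝ} (h : ∀ᶠ s in 𝓝 t, p s) :
    ∃ q : ℚ, t < q ∧ p q := by
  obtain ⟨ε, hε, hball⟩ := Metric.eventually_nhds_iff.1 h
  obtain ⟨q, hq₁, hq₂⟩ := exists_rat_btwn (lt_add_of_pos_right t hε)
  exact ⟨q, hq₁, hball (by rw [Real.dist_eq, abs_lt]; constructor <;> linarith)⟩

theorem tendsto_empFreq_abs_div_le {u : ℕ → ℕ → ℝ} {v w σ δ : ℕ → ℝ} {σ₀ : ℝ} {G : ℝ → ℝ}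
    {H : ℕ → ℝ} (hσ₀ : 0 < σ₀) (hσ_pos : ∀ n, 0 < σ n) (hσ : Tendsto σ atTop (𝓝 σ₀))
    (hδ_nonneg : ∀ n, 0 ≤ δ n) (hδ : Tendsto δ atTop (𝓝 0))
    (h : ∀ n i, |u n i - σ₀ * v i| ≤ w i * δ n) (hG : Continuous G)
    (hv : ∀ s : ℚ, Tendsto (empFreq fun i => |v i| ≤ s) atTop (𝓝 (G s)))
    (hH : Tendsto H atTop (𝓝 0))
    (hw : ∀ m : ℕ, Tendsto (empFreq fun i => (m : ℝ) < w i) atTop (𝓝 (H m))) (t : ℝ) :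
    Tendsto (fun n => empFreq (fun i => |u n i| / σ n ≤ t) n) atTop (𝓝 (G t)) := by
  rw [tendsto_order]
  constructor
  · intro a ha
    obtain ⟨m, hm⟩ := (hH.eventually_lt_const (by linarith : (0 : ℝ) < (G t - a) / 3)).exists
    obtain ⟨s, hst, hs⟩ := (hG.continuousAt.eventually_const_lt
      (by linarith : G t - (G t - a) / 3 < G t)).exists_rat_lt
    have hthr : ∀ᶠ n in atTop, σ₀ * s + m * δ n < σ n * t :=
      (tendsto_const_nhds.add (hδ.const_mul _)).eventually_lt (hσ.mul_const t)
        (by simpa using mul_lt_mul_of_pos_left hst hσ₀)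
    have hfreq := ((hv s).sub (hw m)).eventually_const_lt (by linarith : a < G s - H m)
    filter_upwards [hthr, hfreq] with n hthr hfreq
    linarith [empFreq_abs_le_le_add (hσ_pos n) hσ₀.le (hδ_nonneg n) (h n) hthr.le n]
  · intro b hb
    obtain ⟨m, hm⟩ := (hH.eventually_lt_const (by linarith : (0 : ℝ) < (b - G t) / 3)).exists
    obtain ⟨s, hts, hs⟩ := (hG.continuousAt.eventually_lt_const
      (by linarith : G t < G t + (b - G t) / 3)).exists_rat_gt
    have hthr : ∀ᶠ n in atTop, σ n * t + m * δ n < σ₀ * s :=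
      ((hσ.mul_const t).add (hδ.const_mul _)).eventually_lt tendsto_const_nhds
        (by simpa [mul_comm] using mul_lt_mul_of_pos_left hts hσ₀)
    have hfreq := ((hv s).add (hw m)).eventually_lt_const (by linarith : G s + H m < b)
    filter_upwards [hthr, hfreq] with n hthr hfreq
    linarith [empFreq_abs_div_le_le_add (hσ_pos n) hσ₀ (hδ_nonneg n) (h n) hthr.le n]

section Polya

variable {ι : Type*} {l : Filter ι} {f : ι → ℝ → ℝ} {g : ℝ → ℝ}

theorem tendstoLocallyUniformly_of_monotone_of_continuous (hf : ∀ n, Monotone (f n))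
    (hg : Continuous g) (hfg : ∀ t, Tendsto (fun n => f n t) l (𝓝 (g t))) :
    TendstoLocallyUniformly f g l := by
  rw [Metric.tendstoLocallyUniformly_iff]
  intro η hη t
  obtain ⟨δ, hδ, hgδ⟩ := Metric.continuous_iff.1 hg t (η / 3) (by positivity)
  have hclose : ∀ s ∈ Icc (t - δ / 2) (t + δ / 2), |g s - g t| < η / 3 := fun s hs =>
    hgδ s (by rw [Real.dist_eq, abs_lt]; constructor <;> linarith [hs.1, hs.2])
  refine ⟨Icc (t - δ / 2) (t + δ / 2), Icc_mem_nhds (by linarith) (by linarith), ?_⟩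
  have hlo := (hfg (t - δ / 2)).eventually_const_lt (sub_lt_self _ (by positivity : 0 < η / 3))
  have hhi :=
    (hfg (t + δ / 2)).eventually_lt_const (lt_add_of_pos_right _ (by positivity : 0 < η / 3))
  filter_upwards [hlo, hhi] with n hlo hhi s hs
  have h₁ := abs_lt.1 (hclose s hs)
  have h₂ := abs_lt.1 (hclose _ ⟨le_rfl, by linarith⟩)
  have h₃ := abs_lt.1 (hclose _ ⟨by linarith, le_rfl⟩)
  rw [Real.dist_eq, abs_lt]
  constructor <;> linarith [hf n hs.1, hf n hs.2]

theorem tendstoUniformly_of_monotone_of_continuous {a b : ℝ} (hf : ∀ n, Monotone (f n))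
    (ha : ∀ n t, a ≤ f n t) (hb : ∀ n t, f n t ≤ b) (hg : Continuous g)
    (hg_bot : Tendsto g atBot (𝓝 a)) (hg_top : Tendsto g atTop (𝓝 b))
    (hfg : ∀ t, Tendsto (fun n => f n t) l (𝓝 (g t))) : TendstoUniformly f g l := by
  rw [Metric.tendstoUniformly_iff]
  intro η hη
  have hη3 : 0 < η / 3 := by positivity
  obtain ⟨T₁, hT₁⟩ := eventually_atBot.1 (hg_bot.eventually (Metric.ball_mem_nhds a hη3))
  obtain ⟨T₂, hT₂⟩ := eventually_atTop.1 (hg_top.eventually (Metric.ball_mem_nhds b hη3))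
  have hmid := Metric.tendstoUniformlyOn_iff.1 (tendstoLocallyUniformly_iff_forall_isCompact.1
    (tendstoLocallyUniformly_of_monotone_of_continuous hf hg hfg) (Icc T₁ T₂) isCompact_Icc) η hη
  have hlo := (hfg T₁).eventually_lt_const (lt_add_of_pos_right _ hη3)
  have hhi := (hfg T₂).eventually_const_lt (sub_lt_self _ hη3)
  filter_upwards [hmid, hlo, hhi] with n hmid hlo hhi t
  rcases le_total t T₁ with ht | ht
  · have h₁ := abs_lt.1 (Real.dist_eq _ _ ▸ hT₁ t ht)
    have h₂ := abs_lt.1 (Real.dist_eq _ _ ▸ hT₁ T₁ le_rfl)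
    rw [Real.dist_eq, abs_lt]
    constructor <;> linarith [hf n ht, ha n t]
  rcases le_total t T₂ with ht' | ht'
  · exact hmid t ⟨ht, ht'⟩
  · have h₁ := abs_lt.1 (Real.dist_eq _ _ ▸ hT₂ t ht')
    have h₂ := abs_lt.1 (Real.dist_eq _ _ ▸ hT₂ T₂ le_rfl)
    rw [Real.dist_eq, abs_lt]
    constructor <;> linarith [hf n ht', hb n t]

end Polya

theorem TendstoUniformlyOn.tendsto_iSup_abs_sub {ι α : Type*} {l : Filter ι} {F : ι → α → ℝ}
    {f : α → ℝ} {s : Set α} (h : TendstoUniformlyOn F f l s) :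
    Tendsto (fun n => ⨆ t : s, |F n t - f t|) l (𝓝 0) := by
  rw [Metric.tendsto_nhds]
  intro η hη
  filter_upwards [Metric.tendstoUniformlyOn_iff.1 h (η / 2) (half_pos hη)] with n hn
  rw [Real.dist_0_eq_abs, abs_of_nonneg (Real.iSup_nonneg fun _ => abs_nonneg _)]
  refine (Real.iSup_le (fun t => ?_) (half_pos hη).le).trans_lt (half_lt_self hη)
  rw [abs_sub_comm, ← Real.dist_eq]
  exact (hn t t.2).le

theorem tendsto_iSup_abs_empFreq_abs_div_le_sub {u : ℕ → ℕ → ℝ} {v w σ δ : ℕ → ℝ} {σ₀ : ℝ}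
    {G : ℝ → ℝ} {H : ℕ → ℝ} (hσ₀ : 0 < σ₀) (hσ_pos : ∀ n, 0 < σ n)
    (hσ : Tendsto σ atTop (𝓝 σ₀)) (hδ_nonneg : ∀ n, 0 ≤ δ n) (hδ : Tendsto δ atTop (𝓝 0))
    (h : ∀ n i, |u n i - σ₀ * v i| ≤ w i * δ n) (hG : Continuous G)
    (hG_bot : Tendsto G atBot (𝓝 0)) (hG_top : Tendsto G atTop (𝓝 1))
    (hv : ∀ s : ℚ, Tendsto (empFreq fun i => |v i| ≤ s) atTop (𝓝 (G s)))
    (hH : Tendsto H atTop (𝓝 0))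
    (hw : ∀ m : ℕ, Tendsto (empFreq fun i => (m : ℝ) < w i) atTop (𝓝 (H m))) (s : Set ℝ) :
    Tendsto (fun n => ⨆ t : s, |empFreq (fun i => |u n i| / σ n ≤ t) n - G t|) atTop (𝓝 0) :=
  TendstoUniformlyOn.tendsto_iSup_abs_sub (F := fun n t => empFreq (fun i => |u n i| / σ n ≤ t) n)
    (tendstoUniformly_of_monotone_of_continuous
      (fun n _ _ hst => empFreq_mono (fun _ hi => hi.trans hst) n) (fun n _ => empFreq_nonneg n)
      (fun n _ => empFreq_le_one n) hG hG_bot hG_top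
      (tendsto_empFreq_abs_div_le hσ₀ hσ_pos hσ hδ_nonneg hδ h hG hv hH hw)).tendstoUniformlyOn

lemma ProbabilityTheory.measureReal_Icc_of_continuousWithinAt_cdf {μ : Measure ℝ}
    [IsProbabilityMeasure μ] {a : ℝ} (ha : ContinuousWithinAt (cdf μ) (Iic a) a) (b : ℝ) :
    μ.real (Icc a b) = max (cdf μ b - cdf μ a) 0 := by
  have h := (cdf μ).measure_Icc a b
  rw [measure_cdf, ha.leftLim_eq] at h
  rw [measureReal_def, h, ENNReal.toReal_ofReal']

section RandomVariable

variable {Ω : Type*} [MeasurableSpace Ω] {P : Measure Ω} [IsProbabilityMeasure P] {X : Ω → ℝ}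

lemma ProbabilityTheory.cdf_map_eq_measureReal (hX : Measurable X) (t : ℝ) :
    cdf (P.map X) t = P.real {ω | X ω ≤ t} := by
  have := Measure.isProbabilityMeasure_map (μ := P) hX.aemeasurable
  rw [cdf_eq_real, map_measureReal_apply hX measurableSet_Iic]
  rfl

lemma ProbabilityTheory.cdf_map_abs_eq (hX : Measurable X) (hcont : Continuous (cdf (P.map X)))
    (t : ℝ) : cdf (P.map fun ω => |X ω|) t = max (cdf (P.map X) t - cdf (P.map X) (-t)) 0 := by
  have := Measure.isProbabilityMeasure_map (μ := P) hX.aemeasurable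
  rw [cdf_map_eq_measureReal hX.abs,
    ← measureReal_Icc_of_continuousWithinAt_cdf hcont.continuousWithinAt,
    map_measureReal_apply hX measurableSet_Icc]
  congr 1
  ext ω
  simp [abs_le]

lemma ProbabilityTheory.continuous_cdf_map_abs (hX : Measurable X)
    (hcont : Continuous (cdf (P.map X))) : Continuous (cdf (P.map fun ω => |X ω|)) := by
  rw [show ⇑(cdf (P.map fun ω => |X ω|)) = _ from funext (cdf_map_abs_eq hX hcont)]
  fun_prop

end RandomVariable

lemma tendsto_measureReal_natCast_lt {Ω : Type*} [MeasurableSpace Ω] (μ : Measure Ω)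
    [IsFiniteMeasure μ] {X : Ω → ℝ} (hX : Measurable X) :
    Tendsto (fun m : ℕ => μ.real {ω | (m : ℝ) < X ω}) atTop (𝓝 0) := by
  have hanti : Antitone fun m : ℕ => {ω | (m : ℝ) < X ω} :=
    fun a b hab _ (hω : (b : ℝ) < _) => (Nat.cast_le.2 hab).trans_lt hω
  have h := tendsto_measure_iInter_atTop
    (fun m => (measurableSet_lt measurable_const hX).nullMeasurableSet) hanti
    ⟨0, measure_ne_top μ _⟩
  have hempty : ⋂ m : ℕ, {ω | (m : ℝ) < X ω} = ∅ := by
    ext ω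
    simpa using exists_nat_ge (X ω)
  rw [hempty, measure_empty] at h
  exact (ENNReal.tendsto_toReal ENNReal.zero_ne_top).comp h

lemma abs_sum_mul_sub_sum_mul_le {ι : Type*} [Fintype ι] (x β β' : EuclideanSpace ℝ ι) :
    |∑ j, x j * β j - ∑ j, x j * β' j| ≤ ‖x‖ * ‖β - β'‖ := by
  have hinner : ∀ γ : EuclideanSpace ℝ ι, ∑ j, x j * γ j = ⟪x, γ⟫_ℝ := fun γ => by
    simp [PiLp.inner_apply, mul_comm]
  rw [hinner, hinner, ← inner_sub_right]
  exact abs_real_inner_le_norm _ _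

theorem absResiduals_empCDF_uniform_consistency_general
    {Ω : Type*} [MeasurableSpace Ω] (P : Measure Ω) [IsProbabilityMeasure P]
    {p : ℕ}
    -- the observations and errors
    (x : ℕ → Ω → EuclideanSpace ℝ (Fin p)) (ε : ℕ → Ω → ℝ) (y : ℕ → Ω → ℝ)
    (hx_meas : ∀ i, Measurable (x i)) (hε_meas : ∀ i, Measurable (ε i))
    -- the linear model
    (β0 : EuclideanSpace ℝ (Fin p)) (σ0 : ℝ) (hσ0 : 0 < σ0)
    (hmod : ∀ i ω, y i ω = (∑ j, x i ω j * β0 j) + σ0 * ε i ω)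
    -- (ε_i, x_i) are i.i.d., with ε_i independent of x_i
    (hindep : iIndepFun (fun i ω => (ε i ω, x i ω)) P)
    (hident : ∀ i, IdentDistrib (fun ω => (ε i ω, x i ω)) (fun ω => (ε 0 ω, x 0 ω)) P P)
    -- G₀ is the continuous distribution function of the errors, symmetric around 0
    (G0 : ℝ → ℝ)
    (hG0 : ∀ i t, (P {ω | ε i ω ≤ t}).toReal = G0 t)
    (hG0_cont : Continuous G0)
    -- strongly consistent estimators
    (βhat : ℕ → Ω → EuclideanSpace ℝ (Fin p)) (σhat : ℕ → Ω → ℝ)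
    (hσhat_pos : ∀ n ω, 0 < σhat n ω)
    (hβhat : ∀ᵐ ω ∂P, Tendsto (fun n => βhat n ω) atTop (nhds β0))
    (hσhat : ∀ᵐ ω ∂P, Tendsto (fun n => σhat n ω) atTop (nhds σ0))
    -- G₀⁺ is the distribution function of |ε₁|
    (G0plus : ℝ → ℝ)
    (hG0plus : ∀ t, (P {ω | |ε 0 ω| ≤ t}).toReal = G0plus t) :
    ∀ᵐ ω ∂P, Tendsto
      (fun n => ⨆ t : Ici (0:ℝ),
        |(∑ i ∈ Finset.range n,
            if |y i ω - ∑ j, x i ω j * βhat n ω j| / σhat n ω ≤ (t : ℝ) then (1:ℝ) else 0) / n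
          - G0plus t|)
      atTop (nhds 0) := by
  have hG0_cdf : G0 = cdf (P.map (ε 0)) := funext fun t => by
    rw [cdf_map_eq_measureReal (hε_meas 0), ← hG0 0 t]
    rfl
  have hG0plus_cdf : G0plus = cdf (P.map fun ω => |ε 0 ω|) := funext fun t => by
    rw [cdf_map_eq_measureReal (hε_meas 0).abs, ← hG0plus]
    rfl
  have hZ : ∀ i, Measurable fun ω => (ε i ω, x i ω) := fun i => (hε_meas i).prodMk (hx_meas i)
  have hE : ∀ᵐ ω ∂P, ∀ s : ℚ,
      Tendsto (empFreq fun i => |ε i ω| ≤ s) atTop (𝓝 (G0plus s)) :=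
    ae_all_iff.2 fun s => by
      rw [← hG0plus]
      exact (ae_tendsto_empFreq_mem hZ hindep hident
        (measurableSet_le measurable_fst.abs measurable_const :
          MeasurableSet {q : ℝ × EuclideanSpace ℝ (Fin p) | |q.1| ≤ s})).mono fun _ h => h
  have hA : ∀ᵐ ω ∂P, ∀ m : ℕ, Tendsto (empFreq fun i => (m : ℝ) < ‖x i ω‖) atTop
      (𝓝 (P.real {ω | (m : ℝ) < ‖x 0 ω‖})) :=
    ae_all_iff.2 fun m => (ae_tendsto_empFreq_mem hZ hindep hident
      (measurableSet_lt measurable_const measurable_snd.norm :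
        MeasurableSet {q : ℝ × EuclideanSpace ℝ (Fin p) | (m : ℝ) < ‖q.2‖})).mono fun _ h => h
  filter_upwards [hβhat, hσhat, hE, hA] with ω hβ hσ hEω hAω
  have hres : ∀ n i, |(y i ω - ∑ j, x i ω j * βhat n ω j) - σ0 * ε i ω| ≤
      ‖x i ω‖ * ‖βhat n ω - β0‖ := fun n i => by
    rw [hmod, add_sub_right_comm, add_sub_cancel_right, norm_sub_rev]
    exact abs_sum_mul_sub_sum_mul_le _ _ _
  exact tendsto_iSup_abs_empFreq_abs_div_le_sub hσ0 (hσhat_pos · ω) hσ (fun n => norm_nonneg _)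
    (tendsto_iff_norm_sub_tendsto_zero.1 hβ) hres
    (hG0plus_cdf ▸ continuous_cdf_map_abs (hε_meas 0) (hG0_cdf ▸ hG0_cont))
    (hG0plus_cdf ▸ tendsto_cdf_atBot _) (hG0plus_cdf ▸ tendsto_cdf_atTop _) hEω
    (tendsto_measureReal_natCast_lt P (hx_meas 0).norm) hAω (Ici 0)

/-- Lemma B.2 (a): under the linear regression model, the empirical
distribution function of the absolute standardized residuals converges uniformly, almost
surely, to the distribution function of the absolute errors. -/
theorem absResiduals_empCDF_uniform_consistency
    {Ω : Type*} [MeasurableSpace Ω] (P : Measure Ω) [IsProbabilityMeasure P]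
    {p : ℕ}
    -- the observations and errors
    (x : ℕ → Ω → EuclideanSpace ℝ (Fin p)) (ε : ℕ → Ω → ℝ) (y : ℕ → Ω → ℝ)
    (hx_meas : ∀ i, Measurable (x i)) (hε_meas : ∀ i, Measurable (ε i))
    -- the linear model
    (β0 : EuclideanSpace ℝ (Fin p)) (σ0 : ℝ) (hσ0 : 0 < σ0)
    (hmod : ∀ i ω, y i ω = (∑ j, x i ω j * β0 j) + σ0 * ε i ω)
    -- (ε_i, x_i) are i.i.d., with ε_i independent of x_i
    (hindep : iIndepFun (fun i ω => (ε i ω, x i ω)) P)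
    (hident : ∀ i, IdentDistrib (fun ω => (ε i ω, x i ω)) (fun ω => (ε 0 ω, x 0 ω)) P P)
    (hεx : ∀ i, IndepFun (ε i) (x i) P)
    -- G₀ is the continuous distribution function of the errors, symmetric around 0
    (G0 : ℝ → ℝ)
    (hG0 : ∀ i t, (P {ω | ε i ω ≤ t}).toReal = G0 t)
    (hG0_cont : Continuous G0)
    (hG0_symm : ∀ t, G0 (-t) = 1 - G0 t)
    -- strongly consistent estimators
    (βhat : ℕ → Ω → EuclideanSpace ℝ (Fin p)) (σhat : ℕ → Ω → ℝ)
    (hσhat_pos : ∀ n ω, 0 < σhat n ω)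
    (hβhat : ∀ᵐ ω ∂P, Tendsto (fun n => βhat n ω) atTop (nhds β0))
    (hσhat : ∀ᵐ ω ∂P, Tendsto (fun n => σhat n ω) atTop (nhds σ0))
    -- G₀⁺ is the distribution function of |ε₁|
    (G0plus : ℝ → ℝ)
    (hG0plus : ∀ t, (P {ω | |ε 0 ω| ≤ t}).toReal = G0plus t) :
    ∀ᵐ ω ∂P, Tendsto
      (fun n => ⨆ t : Ici (0:ℝ),
        |(∑ i ∈ Finset.range n,
            if |y i ω - ∑ j, x i ω j * βhat n ω j| / σhat n ω ≤ (t : ℝ) then (1:ℝ) else 0) / n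
          - G0plus t|)
      atTop (nhds 0) :=
  absResiduals_empCDF_uniform_consistency_general P x ε y hx_meas hε_meas β0 σ0 hσ0 hmod hindep
    hident G0 hG0 hG0_cont βhat σhat hσhat_pos hβhat hσhat G0plus hG0plus
end

section
/- Let (y_i, x_i) be i.i.d. with y_i = f(x_i, β_0) + σ_0 ε_i, where the errors ε_i are i.i.d. with distribution function G_0 continuous and symmetric around 0, independent of x_i, and σ_0 > 0. Assume (C4): the class F = { x ↦ f(x, β) : ‖β − β_0‖ ≤ 1 } has an envelope F ∈ L¹(P_x) and finite ε-bracketing numbers N_{[ ]}(ε, F, L¹(P_x)) < ∞ for every ε > 0, and (C5): G_0 has a bounded density g_0. Fix t ≥ 0 and set V_0 = {β : ‖β − β_0‖ ≤ 1} and I_0 = [σ_0/2, 2σ_0]. Then for the class H = { (y, x) ↦ 1{ |y − f(x, β)| ≤ σ t } : (β, σ) ∈ V_0 × I_0 }, one has sup_{h∈H} | (1/n) Σ_{i=1}^n h(y_i, x_i) − E h(y_1, x_1) | → 0 almost surely. -/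
/-!
Writing `y = f(x, β₀) + σ₀ ε`, the event `|y - f(x, β)| ≤ σ t` says that the error `ε` lies in
the window of radius `σ t / σ₀` around `(f(x, β) - f(x, β₀)) / σ₀`. An `L¹` bracket
`f_L ≤ f(·, β) ≤ f_U` and a grid point `ρ ≤ σ t / σ₀ ≤ ρ + η` squeeze this window between an
inner and an outer window whose endpoints are built from `f_L`, `f_U`, `ρ` and `η`. There are
finitely many such windows, the indicators of each obey the strong law of large numbers, and since
the errors have a density bounded by `C` the means of the outer and inner windows differ by at most
`2C (∫ (f_U - f_L) / σ₀ + η)`. Squeezing the empirical means between finitely many bracket means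
gives almost sure convergence uniformly over the class.
-/

open MeasureTheory ProbabilityTheory Filter Set Topology

noncomputable def sampleMean (z : ℕ → ℝ) (n : ℕ) : ℝ := (∑ i ∈ Finset.range n, z i) / n

theorem sampleMean_mono {z w : ℕ → ℝ} (h : z ≤ w) (n : ℕ) : sampleMean z n ≤ sampleMean w n :=
  div_le_div_of_nonneg_right (Finset.sum_le_sum fun i _ => h i) n.cast_nonneg

structure SLLNBracketing {Ω Θ : Type*} [MeasurableSpace Ω] (P : Measure Ω)
    (Z : Θ → ℕ → Ω → ℝ) (M : Θ → ℝ) (δ : ℝ) where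
  ι : Type
  [finite : Finite ι]
  lower : ι → ℕ → Ω → ℝ
  upper : ι → ℕ → Ω → ℝ
  lowerMean : ι → ℝ
  upperMean : ι → ℝ
  ae_tendsto_lower : ∀ j, ∀ᵐ ω ∂P, Tendsto (sampleMean (lower j · ω)) atTop (𝓝 (lowerMean j))
  ae_tendsto_upper : ∀ j, ∀ᵐ ω ∂P, Tendsto (sampleMean (upper j · ω)) atTop (𝓝 (upperMean j))
  ae_bracket : ∀ᵐ ω ∂P, ∀ θ, ∃ j, (lower j · ω) ≤ (Z θ · ω) ∧ (Z θ · ω) ≤ (upper j · ω) ∧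
    lowerMean j ≤ M θ ∧ M θ ≤ upperMean j ∧ upperMean j - lowerMean j ≤ δ

theorem ae_tendstoUniformly_sampleMean_of_bracketing {Ω Θ : Type*} [MeasurableSpace Ω]
    {P : Measure Ω} {Z : Θ → ℕ → Ω → ℝ} {M : Θ → ℝ}
    (h : ∀ δ > 0, Nonempty (SLLNBracketing P Z M δ)) :
    ∀ᵐ ω ∂P, TendstoUniformly (fun n θ => sampleMean (Z θ · ω) n) M atTop := by
  have b (k : ℕ) : SLLNBracketing P Z M (1 / (k + 1)) := (h _ Nat.one_div_pos_of_nat).some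
  have hae : ∀ᵐ ω ∂P, ∀ k, (∀ j, Tendsto (sampleMean ((b k).lower j · ω)) atTop
        (𝓝 ((b k).lowerMean j))) ∧
      (∀ j, Tendsto (sampleMean ((b k).upper j · ω)) atTop (𝓝 ((b k).upperMean j))) ∧
      ∀ θ, ∃ j, ((b k).lower j · ω) ≤ (Z θ · ω) ∧ (Z θ · ω) ≤ ((b k).upper j · ω) ∧
        (b k).lowerMean j ≤ M θ ∧ M θ ≤ (b k).upperMean j ∧
        (b k).upperMean j - (b k).lowerMean j ≤ 1 / (k + 1) := by
    refine ae_all_iff.2 fun k => ?_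
    have := (b k).finite
    filter_upwards [ae_all_iff.2 (b k).ae_tendsto_lower, ae_all_iff.2 (b k).ae_tendsto_upper,
      (b k).ae_bracket] with ω hL hU hB using ⟨hL, hU, hB⟩
  filter_upwards [hae] with ω hω
  refine Metric.tendstoUniformly_iff.2 fun r hr => ?_
  obtain ⟨k, hk⟩ := exists_nat_one_div_lt (half_pos hr)
  obtain ⟨hL, hU, hB⟩ := hω k
  have := (b k).finite
  have hclose : ∀ᶠ n in atTop, ∀ j,
      |sampleMean ((b k).lower j · ω) n - (b k).lowerMean j| < r / 2 ∧
      |sampleMean ((b k).upper j · ω) n - (b k).upperMean j| < r / 2 :=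
    eventually_all.2 fun j => (Metric.tendsto_nhds.1 (hL j) _ (half_pos hr)).and
      (Metric.tendsto_nhds.1 (hU j) _ (half_pos hr))
  filter_upwards [hclose] with n hn θ
  obtain ⟨j, hLZ, hZU, hLM, hMU, hgap⟩ := hB θ
  have h1 := sampleMean_mono hLZ n
  have h2 := sampleMean_mono hZU n
  have h3 := abs_lt.1 (hn j).1
  have h4 := abs_lt.1 (hn j).2
  rw [Real.dist_eq, abs_lt]
  constructor <;> linarith

theorem tendsto_iSup_iSup_abs_sub_of_tendstoUniformly {α β : Type*} {F : ℕ → α × β → ℝ}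
    {G : α × β → ℝ} (h : TendstoUniformly F G atTop) :
    Tendsto (fun n => ⨆ a, ⨆ b, |F n (a, b) - G (a, b)|) atTop (𝓝 0) := by
  refine Metric.tendsto_nhds.2 fun r hr => ?_
  filter_upwards [Metric.tendstoUniformly_iff.1 h _ (half_pos hr)] with n hn
  have hsup : (⨆ a, ⨆ b, |F n (a, b) - G (a, b)|) ≤ r / 2 :=
    Real.iSup_le (fun a => Real.iSup_le (fun b => by
      rw [abs_sub_comm, ← Real.dist_eq]; exact (hn (a, b)).le) (half_pos hr).le) (half_pos hr).le
  rw [Real.dist_0_eq_abs, abs_of_nonneg (Real.iSup_nonneg fun a => Real.iSup_nonneg fun b =>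
    abs_nonneg _)]
  linarith

/-- `N_[](δ, F, L¹(μ)) < ∞` for every `δ > 0`. -/
def FiniteBracketing {X B : Type*} [MeasurableSpace X] (μ : Measure X) (F : B → X → ℝ) : Prop :=
  ∀ δ > 0, ∃ (m : ℕ) (lo hi : Fin m → X → ℝ),
    (∀ k, Integrable (lo k) μ ∧ Integrable (hi k) μ ∧ ∫ v, (hi k v - lo k v) ∂μ ≤ δ) ∧
    ∀ b, ∃ k, lo k ≤ F b ∧ F b ≤ hi k

theorem FiniteBracketing.aestronglyMeasurable {X B : Type*} [MeasurableSpace X] {μ : Measure X}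
    {F : B → X → ℝ} (h : FiniteBracketing μ F) (b : B) : AEStronglyMeasurable (F b) μ := by
  choose m lo hi hint k hk using fun n : ℕ => h (1 / (n + 1)) Nat.one_div_pos_of_nat
  set gL : ℕ → X → ℝ := fun n => lo n (k n b)
  set gU : ℕ → X → ℝ := fun n => hi n (k n b)
  have hbddL (v : X) : BddAbove (range fun n => gL n v) := ⟨F b v, by
    rintro _ ⟨n, rfl⟩; exact (hk n b).1 v⟩
  have hbddU (v : X) : BddBelow (range fun n => gU n v) := ⟨F b v, by
    rintro _ ⟨n, rfl⟩; exact (hk n b).2 v⟩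
  set sL : X → ℝ := fun v => ⨆ n, gL n v
  set iU : X → ℝ := fun v => ⨅ n, gU n v
  have hsL : AEMeasurable sL μ := AEMeasurable.iSup fun n => (hint n (k n b)).1.aemeasurable
  have hiU : AEMeasurable iU μ := AEMeasurable.iInf fun n => (hint n (k n b)).2.1.aemeasurable
  have hsL_le (v : X) : sL v ≤ F b v := ciSup_le fun n => (hk n b).1 v
  have hle_iU (v : X) : F b v ≤ iU v := le_ciInf fun n => (hk n b).2 v
  have hgap (n : ℕ) (v : X) : iU v - sL v ≤ gU n v - gL n v :=
    sub_le_sub (ciInf_le (hbddU v) n) (le_ciSup (hbddL v) n)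
  have hnonneg (v : X) : 0 ≤ iU v - sL v := sub_nonneg.2 ((hsL_le v).trans (hle_iU v))
  have hint0 : Integrable (fun v => iU v - sL v) μ :=
    ((hint 0 (k 0 b)).2.1.sub (hint 0 (k 0 b)).1).mono' (hiU.sub hsL).aestronglyMeasurable
      (ae_of_all _ fun v => by
        rw [Real.norm_of_nonneg (hnonneg v)]; exact hgap 0 v)
  have hzero : ∫ v, (iU v - sL v) ∂μ = 0 := by
    refine le_antisymm (le_of_forall_pos_le_add fun r hr => ?_)
      (integral_nonneg hnonneg)
    obtain ⟨n, hn⟩ := exists_nat_one_div_lt hr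
    calc ∫ v, (iU v - sL v) ∂μ ≤ ∫ v, (gU n v - gL n v) ∂μ :=
          integral_mono hint0 ((hint n (k n b)).2.1.sub (hint n (k n b)).1) (hgap n)
      _ ≤ 0 + r := by linarith [(hint n (k n b)).2.2]
  have hae : iU =ᵐ[μ] sL := by
    filter_upwards [(integral_eq_zero_iff_of_nonneg hnonneg hint0).1 hzero] with v hv
    exact sub_eq_zero.1 hv
  refine hsL.aestronglyMeasurable.congr ?_
  filter_upwards [hae] with v hv
  exact le_antisymm (hsL_le v) (hv ▸ hle_iU v)

theorem FiniteBracketing.exists_measurable {X B : Type*} [MeasurableSpace X] {μ : Measure X}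
    {F : B → X → ℝ} (h : FiniteBracketing μ F) {δ : ℝ} (hδ : 0 < δ) :
    ∃ (m : ℕ) (lo hi : Fin m → X → ℝ) (G : X → Prop), (∀ᵐ v ∂μ, G v) ∧
      (∀ k, Measurable (lo k) ∧ Measurable (hi k) ∧
        Integrable (fun v => hi k v - lo k v) μ ∧ ∫ v, (hi k v - lo k v) ∂μ ≤ δ) ∧
      ∀ b, ∃ k, ∀ v, G v → lo k v ≤ F b v ∧ F b v ≤ hi k v := by
  obtain ⟨m, lo, hi, hint, hcov⟩ := h δ hδ
  choose lo' hlo' hlo using fun k => (hint k).1.aestronglyMeasurable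
  choose hi' hhi' hhi using fun k => (hint k).2.1.aestronglyMeasurable
  have hdiff (k : Fin m) :
      (fun v => hi k v - lo k v) =ᵐ[μ] fun v => hi' k v - lo' k v := by
    filter_upwards [hlo k, hhi k] with v hl hh
    rw [hl, hh]
  refine ⟨m, lo', hi', fun v => ∀ k, lo k v = lo' k v ∧ hi k v = hi' k v,
    ae_all_iff.2 fun k => (hlo k).and (hhi k), fun k => ⟨(hlo' k).measurable,
      (hhi' k).measurable, ((hint k).2.1.sub (hint k).1).congr (hdiff k),
      (integral_congr_ae (hdiff k)).symm.trans_le (hint k).2.2⟩, fun b => ?_⟩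
  obtain ⟨k, hkl, hkh⟩ := hcov b
  exact ⟨k, fun v hv => ⟨(hv k).1 ▸ hkl v, (hv k).2 ▸ hkh v⟩⟩

theorem integral_Iic_sub_integral_Iic_le {g : ℝ → ℝ} {C u v : ℝ} (hg : ∀ w, g w ≤ C)
    (hint : IntegrableOn g (Iic v)) (huv : u ≤ v) :
    (∫ w in Iic v, g w) - ∫ w in Iic u, g w ≤ C * (v - u) := by
  rw [intervalIntegral.integral_Iic_sub_Iic (hint.mono_set (Iic_subset_Iic.2 huv)) hint]
  calc ∫ w in u..v, g w ≤ ∫ _ in u..v, C :=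
        intervalIntegral.integral_mono_on huv ((intervalIntegrable_iff_integrableOn_Ioc_of_le huv).2
          (hint.mono_set Ioc_subset_Iic_self)) intervalIntegrable_const fun w _ => hg w
    _ = C * (v - u) := by rw [intervalIntegral.integral_const, smul_eq_mul, mul_comm]

theorem measureReal_Icc_eq_cdf_sub {ν : Measure ℝ} [IsProbabilityMeasure ν]
    (h : Continuous (cdf ν)) {u v : ℝ} (huv : u ≤ v) :
    ν.real (Icc u v) = cdf ν v - cdf ν u := by
  have hIcc := (cdf ν).measure_Icc u v
  rw [measure_cdf, h.continuousWithinAt.leftLim_eq] at hIcc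
  rw [measureReal_def, hIcc, ENNReal.toReal_ofReal (sub_nonneg.2 ((cdf ν).mono huv))]

theorem measureReal_Icc_le_add {ν : Measure ℝ} [IsFiniteMeasure ν] {L : ℝ}
    (hL : ∀ u v, u ≤ v → ν.real (Icc u v) ≤ L * (v - u)) {a b a' b' : ℝ} (ha : a' ≤ a)
    (hb : b ≤ b') : ν.real (Icc a' b') ≤ ν.real (Icc a b) + L * ((a - a') + (b' - b)) := by
  have hsub : Icc a' b' ⊆ Icc a' a ∪ Icc a b ∪ Icc b b' := by
    rintro z ⟨h1, h2⟩
    rcases le_total z a with h | h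
    · exact Or.inl (Or.inl ⟨h1, h⟩)
    rcases le_total z b with h' | h'
    · exact Or.inl (Or.inr ⟨h, h'⟩)
    · exact Or.inr ⟨h', h2⟩
  calc ν.real (Icc a' b') ≤ ν.real (Icc a' a) + ν.real (Icc a b) + ν.real (Icc b b') :=
        (measureReal_mono hsub).trans ((measureReal_union_le _ _).trans
          (add_le_add_left (measureReal_union_le _ _) _))
    _ ≤ _ := by linarith [hL _ _ ha, hL _ _ hb]

theorem exists_grid_le_le {η : ℝ} (hη : 0 < η) {lo hi s : ℝ} (hs : s ∈ Icc lo hi) :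
    ∃ l : Fin (⌈(hi - lo) / η⌉₊ + 1), lo + (l : ℕ) * η ≤ s ∧ s ≤ lo + (l : ℕ) * η + η := by
  have hnn : 0 ≤ (s - lo) / η := div_nonneg (sub_nonneg.2 hs.1) hη.le
  refine ⟨⟨⌊(s - lo) / η⌋₊, Nat.lt_succ_of_le ((Nat.floor_mono ?_).trans (Nat.floor_le_ceil _))⟩,
    ?_, ?_⟩
  · exact div_le_div_of_nonneg_right (by linarith [hs.2]) hη.le
  · linarith [(le_div_iff₀ hη).1 (Nat.floor_le hnn)]
  · linarith [(div_lt_iff₀ hη).1 (Nat.lt_floor_add_one ((s - lo) / η))]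

theorem abs_add_mul_sub_le_iff {m s e c r : ℝ} (hs : 0 < s) :
    |m + s * e - c| ≤ r ↔ |e - (c - m) / s| ≤ r / s := by
  have : |m + s * e - c| = |e - (c - m) / s| * s := by
    rw [← abs_of_pos hs, ← abs_mul, abs_of_pos hs]
    congr 1
    field_simp
    ring
  rw [this, le_div_iff₀ hs]

theorem indicator_Icc_le_ite_abs_add_mul_sub_le {m s c cL cU ρ R e : ℝ} (hs : 0 < s)
    (hcL : cL ≤ c) (hcU : c ≤ cU) (hρ : ρ ≤ R / s) :
    (Icc ((cU - m) / s - ρ) ((cL - m) / s + ρ)).indicator 1 e ≤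
      if |m + s * e - c| ≤ R then (1 : ℝ) else 0 := by
  by_cases he : e ∈ Icc ((cU - m) / s - ρ) ((cL - m) / s + ρ)
  · have hL := div_le_div_of_nonneg_right (sub_le_sub_right hcL m) hs.le
    have hU := div_le_div_of_nonneg_right (sub_le_sub_right hcU m) hs.le
    rw [indicator_of_mem he, if_pos ((abs_add_mul_sub_le_iff hs).2
      (abs_le.2 ⟨by linarith [he.1], by linarith [he.2]⟩))]
    rfl
  · rw [indicator_of_notMem he]
    split_ifs <;> norm_num

theorem ite_abs_add_mul_sub_le_le_indicator_Icc {m s c cL cU ρ R e : ℝ} (hs : 0 < s)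
    (hcL : cL ≤ c) (hcU : c ≤ cU) (hρ : R / s ≤ ρ) :
    (if |m + s * e - c| ≤ R then (1 : ℝ) else 0) ≤
      (Icc ((cL - m) / s - ρ) ((cU - m) / s + ρ)).indicator 1 e := by
  split_ifs with he
  · have hL := div_le_div_of_nonneg_right (sub_le_sub_right hcL m) hs.le
    have hU := div_le_div_of_nonneg_right (sub_le_sub_right hcU m) hs.le
    have he' := abs_le.1 ((abs_add_mul_sub_le_iff hs).1 he)
    rw [indicator_of_mem (show e ∈ Icc ((cL - m) / s - ρ) ((cU - m) / s + ρ) from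
      ⟨by linarith [he'.1], by linarith [he'.2]⟩)]
    rfl
  · exact indicator_nonneg (fun _ _ => zero_le_one) _

theorem integrable_ite_abs_le {Ω : Type*} [MeasurableSpace Ω] {P : Measure Ω} [IsFiniteMeasure P]
    {g : Ω → ℝ} (hg : AEMeasurable g P) (c : ℝ) :
    Integrable (fun ω => if |g ω| ≤ c then (1 : ℝ) else 0) P :=
  Integrable.of_bound ((Measurable.ite (measurableSet_le continuous_abs.measurable measurable_const)
    measurable_const measurable_const).comp_aemeasurable hg).aestronglyMeasurable 1
    (ae_of_all _ fun ω => by split_ifs <;> simp)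

theorem ae_forall_comp_of_ae_map {Ω X : Type*} [MeasurableSpace Ω] [MeasurableSpace X]
    {P : Measure Ω} {x : ℕ → Ω → X} (hx : ∀ i, Measurable (x i))
    (hlaw : ∀ i, P.map (x i) = P.map (x 0)) {p : X → Prop} (hp : ∀ᵐ v ∂(P.map (x 0)), p v) :
    ∀ᵐ ω ∂P, ∀ i, p (x i ω) :=
  ae_all_iff.2 fun i => ae_of_ae_map (hx i).aemeasurable (hlaw i ▸ hp)

theorem ae_tendsto_sampleMean_comp {Ω E : Type*} [MeasurableSpace Ω] [MeasurableSpace E]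
    {P : Measure Ω} {Z : ℕ → Ω → E} (hindep : iIndepFun Z P)
    (hident : ∀ i, IdentDistrib (Z i) (Z 0) P P) {φ : E → ℝ} (hφ : Measurable φ)
    (hint : Integrable (fun ω => φ (Z 0 ω)) P) :
    ∀ᵐ ω ∂P, Tendsto (sampleMean fun i => φ (Z i ω)) atTop (𝓝 (∫ ω, φ (Z 0 ω) ∂P)) :=
  strong_law_ae_real (fun i ω => φ (Z i ω)) hint
    (fun _ _ hij => (hindep.comp (fun _ => φ) (fun _ => hφ)).indepFun hij)
    (fun i => (hident i).comp hφ)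

section ErrorWindows

variable {Ω X : Type*} [MeasurableSpace Ω] [MeasurableSpace X] {P : Measure Ω} {ε : Ω → ℝ}
  {x : Ω → X} {a b : X → ℝ}

theorem measurableSet_fst_mem_Icc (ha : Measurable a) (hb : Measurable b) :
    MeasurableSet {p : ℝ × X | p.1 ∈ Icc (a p.2) (b p.2)} :=
  (measurableSet_le (ha.comp measurable_snd) measurable_fst).inter
    (measurableSet_le measurable_fst (hb.comp measurable_snd))

theorem measurable_indicator_fst_mem_Icc (ha : Measurable a) (hb : Measurable b) :
    Measurable fun p : ℝ × X => (Icc (a p.2) (b p.2)).indicator (1 : ℝ → ℝ) p.1 :=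
  measurable_one.indicator (measurableSet_fst_mem_Icc ha hb)

theorem integrable_measureReal_Icc {μ : Measure X} [IsFiniteMeasure μ] {ν : Measure ℝ}
    [IsFiniteMeasure ν] (ha : Measurable a) (hb : Measurable b) :
    Integrable (fun v => ν.real (Icc (a v) (b v))) μ :=
  (integrable_const (ν.real univ)).mono'
    (measurable_measure_prodMk_right (μ := ν)
      (measurableSet_fst_mem_Icc ha hb)).ennreal_toReal.aestronglyMeasurable
    (ae_of_all _ fun _ => by
      rw [Real.norm_of_nonneg measureReal_nonneg]; exact measureReal_mono (subset_univ _))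

theorem integrable_indicator_Icc_comp [IsFiniteMeasure P] (hε : Measurable ε) (hx : Measurable x)
    (ha : Measurable a) (hb : Measurable b) :
    Integrable (fun ω => (Icc (a (x ω)) (b (x ω))).indicator (1 : ℝ → ℝ) (ε ω)) P :=
  Integrable.of_bound ((measurable_indicator_fst_mem_Icc ha hb).comp
    (hε.prodMk hx)).aestronglyMeasurable 1
    (ae_of_all _ fun _ => (norm_indicator_le_norm_self _ _).trans_eq norm_one)

theorem integral_indicator_Icc_eq_integral_measureReal [IsFiniteMeasure P] (hε : Measurable ε)
    (hx : Measurable x) (hεx : IndepFun ε x P) (ha : Measurable a) (hb : Measurable b) :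
    ∫ ω, (Icc (a (x ω)) (b (x ω))).indicator 1 (ε ω) ∂P =
      ∫ v, (P.map ε).real (Icc (a v) (b v)) ∂(P.map x) := by
  have hS := measurableSet_fst_mem_Icc ha hb
  calc ∫ ω, (Icc (a (x ω)) (b (x ω))).indicator 1 (ε ω) ∂P
      = P.real ((fun ω => (ε ω, x ω)) ⁻¹' {p | p.1 ∈ Icc (a p.2) (b p.2)}) :=
        integral_indicator_one (hS.preimage (hε.prodMk hx))
    _ = ((P.map ε).prod (P.map x)).real {p | p.1 ∈ Icc (a p.2) (b p.2)} := by
        rw [← (indepFun_iff_map_prod_eq_prod_map_map hε.aemeasurable hx.aemeasurable).1 hεx,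
          map_measureReal_apply (hε.prodMk hx) hS]
    _ = ∫ v, (P.map ε).real (Icc (a v) (b v)) ∂(P.map x) := by
        rw [measureReal_def, Measure.prod_apply_symm hS, ← integral_toReal
          (measurable_measure_prodMk_right hS).aemeasurable
          (ae_of_all _ fun _ => measure_lt_top _ _)]
        rfl

theorem integral_indicator_Icc_sub_le [IsFiniteMeasure P] (hε : Measurable ε) (hx : Measurable x)
    (hεx : IndepFun ε x P) {L : ℝ}
    (hL : ∀ u v, u ≤ v → (P.map ε).real (Icc u v) ≤ L * (v - u)) {a' b' : X → ℝ}
    (ha : Measurable a) (hb : Measurable b) (ha' : Measurable a') (hb' : Measurable b')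
    (hle : ∀ᵐ v ∂(P.map x), a' v ≤ a v ∧ b v ≤ b' v)
    (hint : Integrable (fun v => (a v - a' v) + (b' v - b v)) (P.map x)) :
    ∫ ω, (Icc (a' (x ω)) (b' (x ω))).indicator 1 (ε ω) ∂P -
        ∫ ω, (Icc (a (x ω)) (b (x ω))).indicator 1 (ε ω) ∂P ≤
      L * ∫ v, ((a v - a' v) + (b' v - b v)) ∂(P.map x) := by
  rw [integral_indicator_Icc_eq_integral_measureReal hε hx hεx ha' hb',
    integral_indicator_Icc_eq_integral_measureReal hε hx hεx ha hb,
    ← integral_sub (integrable_measureReal_Icc ha' hb') (integrable_measureReal_Icc ha hb),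
    ← integral_const_mul]
  refine integral_mono_ae ((integrable_measureReal_Icc ha' hb').sub
    (integrable_measureReal_Icc ha hb)) (hint.const_mul L) ?_
  filter_upwards [hle] with v hv
  linarith [measureReal_Icc_le_add hL hv.1 hv.2]

theorem integral_indicator_Icc_bracket_sub_le [IsProbabilityMeasure P] (hε : Measurable ε)
    (hx : Measurable x) (hεx : IndepFun ε x P) {L : ℝ} (hL0 : 0 ≤ L)
    (hL : ∀ u v, u ≤ v → (P.map ε).real (Icc u v) ≤ L * (v - u)) {F0 FL FU : X → ℝ}
    (hF0 : Measurable F0) (hFL : Measurable FL) (hFU : Measurable FU)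
    (hle : ∀ᵐ v ∂(P.map x), FL v ≤ FU v) (hint : Integrable (fun v => FU v - FL v) (P.map x))
    {σ0 η : ℝ} (hσ0 : 0 < σ0) (hη : 0 ≤ η) (hgap : ∫ v, (FU v - FL v) ∂(P.map x) ≤ σ0 * η)
    (r : ℝ) :
    ∫ ω, (Icc ((FL (x ω) - F0 (x ω)) / σ0 - (r + η))
        ((FU (x ω) - F0 (x ω)) / σ0 + (r + η))).indicator 1 (ε ω) ∂P -
      ∫ ω, (Icc ((FU (x ω) - F0 (x ω)) / σ0 - r)
        ((FL (x ω) - F0 (x ω)) / σ0 + r)).indicator 1 (ε ω) ∂P ≤ 4 * L * η := by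
  have hw (v : X) : ((FU v - F0 v) / σ0 - r - ((FL v - F0 v) / σ0 - (r + η))) +
      ((FU v - F0 v) / σ0 + (r + η) - ((FL v - F0 v) / σ0 + r)) =
        2 / σ0 * (FU v - FL v) + 2 * η := by
    field_simp
    ring
  have hint' : Integrable (fun v => 2 / σ0 * (FU v - FL v) + 2 * η) (P.map x) :=
    (hint.const_mul _).add (integrable_const _)
  refine (integral_indicator_Icc_sub_le hε hx hεx hL (a := fun v => (FU v - F0 v) / σ0 - r)
    (b := fun v => (FL v - F0 v) / σ0 + r) (a' := fun v => (FL v - F0 v) / σ0 - (r + η))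
    (b' := fun v => (FU v - F0 v) / σ0 + (r + η)) (by fun_prop) (by fun_prop) (by fun_prop)
    (by fun_prop) ?_ (by simpa only [hw] using hint')).trans ?_
  · filter_upwards [hle] with v hv
    have := div_le_div_of_nonneg_right (sub_le_sub_right hv (F0 v)) hσ0.le
    constructor <;> linarith
  · have := Measure.isProbabilityMeasure_map (μ := P) hx.aemeasurable
    simp only [hw]
    rw [integral_add (hint.const_mul _) (integrable_const _), integral_const_mul, integral_const,
      probReal_univ, one_smul]
    calc L * (2 / σ0 * ∫ v, (FU v - FL v) ∂(P.map x) + 2 * η)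
        ≤ L * (2 / σ0 * (σ0 * η) + 2 * η) := by gcongr
      _ = 4 * L * η := by field_simp; ring

end ErrorWindows

theorem ae_tendsto_sampleMean_indicator_Icc {Ω X : Type*} [MeasurableSpace Ω] [MeasurableSpace X]
    {P : Measure Ω} [IsFiniteMeasure P] {ε : ℕ → Ω → ℝ} {x : ℕ → Ω → X}
    (hε : Measurable (ε 0)) (hx : Measurable (x 0))
    (hindep : iIndepFun (fun i ω => (ε i ω, x i ω)) P)
    (hident : ∀ i, IdentDistrib (fun ω => (ε i ω, x i ω)) (fun ω => (ε 0 ω, x 0 ω)) P P)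
    {a b : X → ℝ} (ha : Measurable a) (hb : Measurable b) :
    ∀ᵐ ω ∂P, Tendsto (sampleMean fun i => (Icc (a (x i ω)) (b (x i ω))).indicator 1 (ε i ω))
      atTop (𝓝 (∫ ω, (Icc (a (x 0 ω)) (b (x 0 ω))).indicator 1 (ε 0 ω) ∂P)) :=
  ae_tendsto_sampleMean_comp (Z := fun i ω => (ε i ω, x i ω))
    (φ := fun p => (Icc (a p.2) (b p.2)).indicator 1 p.1) hindep hident
    (measurable_indicator_fst_mem_Icc ha hb)
    (integrable_indicator_Icc_comp hε hx ha hb)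

theorem nonempty_sllnBracketing_of_windows {Ω X Θ : Type*} {ι : Type} [MeasurableSpace Ω]
    [MeasurableSpace X] {P : Measure Ω} [IsFiniteMeasure P] {ε : ℕ → Ω → ℝ}
    {x : ℕ → Ω → X} (hε : Measurable (ε 0)) (hx : Measurable (x 0))
    (hindep : iIndepFun (fun i ω => (ε i ω, x i ω)) P)
    (hident : ∀ i, IdentDistrib (fun ω => (ε i ω, x i ω)) (fun ω => (ε 0 ω, x 0 ω)) P P)
    {Z : Θ → ℕ → Ω → ℝ} (hZ : ∀ θ, Integrable (Z θ 0) P) [Finite ι]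
    {aL bL aU bU : ι → X → ℝ} (haL : ∀ j, Measurable (aL j)) (hbL : ∀ j, Measurable (bL j))
    (haU : ∀ j, Measurable (aU j)) (hbU : ∀ j, Measurable (bU j))
    {good : Ω → Prop} (hgood : ∀ᵐ ω ∂P, good ω) {δ : ℝ}
    (hcover : ∀ θ, ∃ j, (∀ ω, good ω → ∀ i,
      (Icc (aL j (x i ω)) (bL j (x i ω))).indicator 1 (ε i ω) ≤ Z θ i ω ∧
        Z θ i ω ≤ (Icc (aU j (x i ω)) (bU j (x i ω))).indicator 1 (ε i ω)) ∧
      ∫ ω, (Icc (aU j (x 0 ω)) (bU j (x 0 ω))).indicator 1 (ε 0 ω) ∂P -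
        ∫ ω, (Icc (aL j (x 0 ω)) (bL j (x 0 ω))).indicator 1 (ε 0 ω) ∂P ≤ δ) :
    Nonempty (SLLNBracketing P Z (fun θ => ∫ ω, Z θ 0 ω ∂P) δ) := by
  refine ⟨{ ι := ι
            lower := fun j i ω => (Icc (aL j (x i ω)) (bL j (x i ω))).indicator 1 (ε i ω)
            upper := fun j i ω => (Icc (aU j (x i ω)) (bU j (x i ω))).indicator 1 (ε i ω)
            lowerMean := fun j => ∫ ω, (Icc (aL j (x 0 ω)) (bL j (x 0 ω))).indicator 1 (ε 0 ω) ∂P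
            upperMean := fun j => ∫ ω, (Icc (aU j (x 0 ω)) (bU j (x 0 ω))).indicator 1 (ε 0 ω) ∂P
            ae_tendsto_lower := fun j =>
              ae_tendsto_sampleMean_indicator_Icc hε hx hindep hident (haL j) (hbL j)
            ae_tendsto_upper := fun j =>
              ae_tendsto_sampleMean_indicator_Icc hε hx hindep hident (haU j) (hbU j)
            ae_bracket := ?_ }⟩
  filter_upwards [hgood] with ω hω θ
  obtain ⟨j, hj, hgap⟩ := hcover θ
  refine ⟨j, fun i => (hj ω hω i).1, fun i => (hj ω hω i).2, ?_, ?_, hgap⟩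
  · refine integral_mono_ae (integrable_indicator_Icc_comp hε hx (haL j) (hbL j)) (hZ θ) ?_
    filter_upwards [hgood] with ω' h' using (hj ω' h' 0).1
  · refine integral_mono_ae (hZ θ) (integrable_indicator_Icc_comp hε hx (haU j) (hbU j)) ?_
    filter_upwards [hgood] with ω' h' using (hj ω' h' 0).2

theorem nonempty_sllnBracketing_indicator_class {Ω X B : Type*} [MeasurableSpace Ω]
    [MeasurableSpace X] {P : Measure Ω} [IsProbabilityMeasure P] {ε : ℕ → Ω → ℝ}
    {x : ℕ → Ω → X} (hε : ∀ i, Measurable (ε i)) (hx : ∀ i, Measurable (x i))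
    (hindep : iIndepFun (fun i ω => (ε i ω, x i ω)) P)
    (hident : ∀ i, IdentDistrib (fun ω => (ε i ω, x i ω)) (fun ω => (ε 0 ω, x 0 ω)) P P)
    (hεx : IndepFun (ε 0) (x 0) P) {f0 : X → ℝ} (hf0 : AEStronglyMeasurable f0 (P.map (x 0)))
    {σ0 : ℝ} (hσ0 : 0 < σ0) {y : ℕ → Ω → ℝ} (hy : ∀ i ω, y i ω = f0 (x i ω) + σ0 * ε i ω)
    {L : ℝ} (hL0 : 0 < L) (hL : ∀ u v, u ≤ v → (P.map (ε 0)).real (Icc u v) ≤ L * (v - u))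
    {f : X → B → ℝ} (hf : FiniteBracketing (P.map (x 0)) fun b v => f v b)
    (s₁ s₂ : ℝ) {t : ℝ} (ht : 0 ≤ t) {δ : ℝ} (hδ : 0 < δ) :
    Nonempty (SLLNBracketing P
      (fun (θ : B × Icc s₁ s₂) i ω => if |y i ω - f (x i ω) θ.1| ≤ θ.2 * t then (1 : ℝ) else 0)
      (fun θ => ∫ ω, (if |y 0 ω - f (x 0 ω) θ.1| ≤ θ.2 * t then (1 : ℝ) else 0) ∂P) δ) := by
  have hη : 0 < δ / (4 * L) := by positivity
  set η := δ / (4 * L) with hη_def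
  obtain ⟨m, FL, FU, G, hG, hbr, hcov⟩ := hf.exists_measurable (mul_pos hσ0 hη)
  obtain ⟨F0, hF0, hF0e⟩ := id hf0
  have hF0m := hF0.measurable
  have hy0 : AEMeasurable (y 0) P := by
    rw [show y 0 = fun ω => f0 (x 0 ω) + σ0 * ε 0 ω from funext (hy 0)]
    exact (hf0.aemeasurable.comp_aemeasurable (hx 0).aemeasurable).add
      ((hε 0).aemeasurable.const_mul σ0)
  have hZ (θ : B × Icc s₁ s₂) :
      Integrable (fun ω => if |y 0 ω - f (x 0 ω) θ.1| ≤ θ.2 * t then (1 : ℝ) else 0) P :=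
    integrable_ite_abs_le (hy0.sub ((hf.aestronglyMeasurable θ.1).aemeasurable.comp_aemeasurable
      (hx 0).aemeasurable)) _
  have hgood : ∀ᵐ ω ∂P, ∀ i, G (x i ω) ∧ F0 (x i ω) = f0 (x i ω) :=
    ae_forall_comp_of_ae_map hx (fun i => ((hident i).comp measurable_snd).map_eq)
      (p := fun v => G v ∧ F0 v = f0 v) (hG.and (hF0e.mono fun _ h => h.symm))
  set N := ⌈(s₂ * t / σ0 - s₁ * t / σ0) / η⌉₊
  let r (l : Fin (N + 1)) : ℝ := s₁ * t / σ0 + (l : ℕ) * η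
  -- The inner window holds the errors whose response is within `σ0 * r l` of every value in
  -- `[FL k, FU k]`, the outer one those within `σ0 * (r l + η)` of some value.
  refine nonempty_sllnBracketing_of_windows (ι := Fin m × Fin (N + 1)) (hε 0) (hx 0) hindep
    hident hZ
    (aL := fun j v => (FU j.1 v - F0 v) / σ0 - r j.2)
    (bL := fun j v => (FL j.1 v - F0 v) / σ0 + r j.2)
    (aU := fun j v => (FL j.1 v - F0 v) / σ0 - (r j.2 + η))
    (bU := fun j v => (FU j.1 v - F0 v) / σ0 + (r j.2 + η))
    (fun j => have := (hbr j.1).2.1; by fun_prop) (fun j => have := (hbr j.1).1; by fun_prop)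
    (fun j => have := (hbr j.1).1; by fun_prop) (fun j => have := (hbr j.1).2.1; by fun_prop)
    hgood fun θ => ?_
  obtain ⟨k, hk⟩ := hcov θ.1
  obtain ⟨l, hl₁, hl₂⟩ := exists_grid_le_le hη (s := θ.2 * t / σ0)
    ⟨div_le_div_of_nonneg_right (mul_le_mul_of_nonneg_right θ.2.2.1 ht) hσ0.le,
      div_le_div_of_nonneg_right (mul_le_mul_of_nonneg_right θ.2.2.2 ht) hσ0.le⟩
  refine ⟨(k, l), fun ω hω i => ?_, ?_⟩
  · obtain ⟨hkL, hkU⟩ := hk _ (hω i).1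
    rw [hy, ← (hω i).2]
    exact ⟨indicator_Icc_le_ite_abs_add_mul_sub_le hσ0 hkL hkU hl₁,
      ite_abs_add_mul_sub_le_le_indicator_Icc hσ0 hkL hkU hl₂⟩
  · refine (integral_indicator_Icc_bracket_sub_le (hε 0) (hx 0) hεx hL0.le hL hF0m (hbr k).1
      (hbr k).2.1 (hG.mono fun v hv => (hk v hv).1.trans (hk v hv).2) (hbr k).2.2.1 hσ0 hη.le
      (hbr k).2.2.2 (r l)).trans_eq ?_
    rw [hη_def]
    field_simp

theorem ulln_indicator_class_nonlinear_general
    {Ω : Type*} [MeasurableSpace Ω] (P : Measure Ω) [IsProbabilityMeasure P]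
    {p q : ℕ}
    -- the observations and errors
    (x : ℕ → Ω → EuclideanSpace ℝ (Fin p)) (ε : ℕ → Ω → ℝ) (y : ℕ → Ω → ℝ)
    (hx_meas : ∀ i, Measurable (x i)) (hε_meas : ∀ i, Measurable (ε i))
    -- the nonlinear model
    (f : EuclideanSpace ℝ (Fin p) → EuclideanSpace ℝ (Fin q) → ℝ)
    (β0 : EuclideanSpace ℝ (Fin q)) (σ0 : ℝ) (hσ0 : 0 < σ0)
    (hmod : ∀ i ω, y i ω = f (x i ω) β0 + σ0 * ε i ω)
    -- (ε_i, x_i) are i.i.d., with ε_i independent of x_i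
    (hindep : iIndepFun (fun i ω => (ε i ω, x i ω)) P)
    (hident : ∀ i, IdentDistrib (fun ω => (ε i ω, x i ω)) (fun ω => (ε 0 ω, x 0 ω)) P P)
    (hεx : ∀ i, IndepFun (ε i) (x i) P)
    -- G₀ is the continuous distribution function of the errors, symmetric around 0
    (G0 : ℝ → ℝ)
    (hG0 : ∀ i t, (P {ω | ε i ω ≤ t}).toReal = G0 t)
    (hG0_cont : Continuous G0)
    -- (C4): envelope in L¹(P_x) and finite bracketing numbers in L¹(P_x)
    (hC4_brack : ∀ ε' : ℝ, 0 < ε' →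
      ∃ (m : ℕ) (fL fU : Fin m → EuclideanSpace ℝ (Fin p) → ℝ),
        (∀ k, Integrable (fL k) (P.map (x 0)) ∧ Integrable (fU k) (P.map (x 0)) ∧
          ∫ xv, (fU k xv - fL k xv) ∂(P.map (x 0)) ≤ ε') ∧
        (∀ β : EuclideanSpace ℝ (Fin q), ‖β - β0‖ ≤ 1 →
          ∃ k, ∀ xv, fL k xv ≤ f xv β ∧ f xv β ≤ fU k xv))
    -- (C5): G₀ has a bounded density g₀
    (g0 : ℝ → ℝ) (hg0_bdd : ∃ C, ∀ u, g0 u ≤ C)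
    (hG0_dens : ∀ s, G0 s = ∫ u in Iic s, g0 u)
    -- the fixed threshold t ≥ 0
    (t : ℝ) (ht : 0 ≤ t) :
    ∀ᵐ ω ∂P, Tendsto
      (fun n =>
        ⨆ β : {b : EuclideanSpace ℝ (Fin q) // ‖b - β0‖ ≤ 1},
          ⨆ σ : Icc (σ0 / 2) (2 * σ0),
            |(∑ i ∈ Finset.range n,
                if |y i ω - f (x i ω) (β : EuclideanSpace ℝ (Fin q))| ≤ (σ : ℝ) * t
                then (1:ℝ) else 0) / n
              - ∫ ω', (if |y 0 ω' - f (x 0 ω') (β : EuclideanSpace ℝ (Fin q))| ≤ (σ : ℝ) * t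
                  then (1:ℝ) else 0) ∂P|)
      atTop (nhds 0) := by
  set ν := P.map (ε 0)
  have : IsProbabilityMeasure ν := Measure.isProbabilityMeasure_map (hε_meas 0).aemeasurable
  have hcdf : ⇑(cdf ν) = G0 := funext fun s => by
    rw [cdf_eq_real, map_measureReal_apply (hε_meas 0) measurableSet_Iic]
    exact hG0 0 s
  obtain ⟨C, hC⟩ := hg0_bdd
  -- `G0` is eventually positive, so `g0` is integrable on every half-line (the integral of a
  -- non-integrable function would be `0`).
  obtain ⟨s₀, hs₀⟩ :=
    eventually_atTop.1 ((tendsto_cdf_atTop ν).eventually (eventually_gt_nhds one_pos))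
  have hg0_int (v : ℝ) : IntegrableOn g0 (Iic v) :=
    IntegrableOn.mono_set (Integrable.of_integral_ne_zero (by
      rw [← hG0_dens, ← hcdf]; exact (hs₀ _ (le_max_right v s₀)).ne'))
      (Iic_subset_Iic.2 (le_max_left v s₀))
  have hν (u v : ℝ) (huv : u ≤ v) : ν.real (Icc u v) ≤ max C 1 * (v - u) := by
    rw [measureReal_Icc_eq_cdf_sub (by rw [hcdf]; exact hG0_cont) huv, hcdf, hG0_dens, hG0_dens]
    exact integral_Iic_sub_integral_Iic_le (fun w => (hC w).trans (le_max_left C 1)) (hg0_int v) huv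
  have hbrack : FiniteBracketing (P.map (x 0))
      fun (b : {b : EuclideanSpace ℝ (Fin q) // ‖b - β0‖ ≤ 1}) v => f v b := fun δ hδ => by
    obtain ⟨m, fL, fU, hint, hcov⟩ := hC4_brack δ hδ
    exact ⟨m, fL, fU, hint, fun b => (hcov b b.2).imp fun k hk =>
      ⟨fun v => (hk v).1, fun v => (hk v).2⟩⟩
  have hbr (δ : ℝ) (hδ : 0 < δ) :=
    nonempty_sllnBracketing_indicator_class (f0 := fun v => f v β0)
      (f := fun v (b : {b // ‖b - β0‖ ≤ 1}) => f v b) hε_meas hx_meas hindep hident (hεx 0)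
      (hbrack.aestronglyMeasurable ⟨β0, by simp⟩) hσ0 hmod (lt_max_of_lt_right one_pos) hν hbrack
      (σ0 / 2) (2 * σ0) ht hδ
  filter_upwards [ae_tendstoUniformly_sampleMean_of_bracketing hbr] with ω hω
  simpa only [sampleMean] using tendsto_iSup_iSup_abs_sub_of_tendstoUniformly hω

/-- Lemma B.4: uniform strong law of large numbers over the class
`H = { (y,x) ↦ 1{|y − f(x,β)| ≤ σ t} : (β,σ) ∈ V₀ × I₀ }` in the nonlinear regression model,
under the bracketing condition (C4) and the bounded-density condition (C5). -/
theorem ulln_indicator_class_nonlinear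
    {Ω : Type*} [MeasurableSpace Ω] (P : Measure Ω) [IsProbabilityMeasure P]
    {p q : ℕ}
    -- the observations and errors
    (x : ℕ → Ω → EuclideanSpace ℝ (Fin p)) (ε : ℕ → Ω → ℝ) (y : ℕ → Ω → ℝ)
    (hx_meas : ∀ i, Measurable (x i)) (hε_meas : ∀ i, Measurable (ε i))
    -- the nonlinear model
    (f : EuclideanSpace ℝ (Fin p) → EuclideanSpace ℝ (Fin q) → ℝ)
    (β0 : EuclideanSpace ℝ (Fin q)) (σ0 : ℝ) (hσ0 : 0 < σ0)
    (hmod : ∀ i ω, y i ω = f (x i ω) β0 + σ0 * ε i ω)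
    -- (ε_i, x_i) are i.i.d., with ε_i independent of x_i
    (hindep : iIndepFun (fun i ω => (ε i ω, x i ω)) P)
    (hident : ∀ i, IdentDistrib (fun ω => (ε i ω, x i ω)) (fun ω => (ε 0 ω, x 0 ω)) P P)
    (hεx : ∀ i, IndepFun (ε i) (x i) P)
    -- G₀ is the continuous distribution function of the errors, symmetric around 0
    (G0 : ℝ → ℝ)
    (hG0 : ∀ i t, (P {ω | ε i ω ≤ t}).toReal = G0 t)
    (hG0_cont : Continuous G0)
    (hG0_symm : ∀ t, G0 (-t) = 1 - G0 t)
    -- (C4): envelope in L¹(P_x) and finite bracketing numbers in L¹(P_x)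
    (hC4_env : ∃ F : EuclideanSpace ℝ (Fin p) → ℝ, Integrable F (P.map (x 0)) ∧
      ∀ β : EuclideanSpace ℝ (Fin q), ‖β - β0‖ ≤ 1 → ∀ xv, |f xv β| ≤ F xv)
    (hC4_brack : ∀ ε' : ℝ, 0 < ε' →
      ∃ (m : ℕ) (fL fU : Fin m → EuclideanSpace ℝ (Fin p) → ℝ),
        (∀ k, Integrable (fL k) (P.map (x 0)) ∧ Integrable (fU k) (P.map (x 0)) ∧
          ∫ xv, (fU k xv - fL k xv) ∂(P.map (x 0)) ≤ ε') ∧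
        (∀ β : EuclideanSpace ℝ (Fin q), ‖β - β0‖ ≤ 1 →
          ∃ k, ∀ xv, fL k xv ≤ f xv β ∧ f xv β ≤ fU k xv))
    -- (C5): G₀ has a bounded density g₀
    (g0 : ℝ → ℝ) (hg0_nonneg : ∀ u, 0 ≤ g0 u) (hg0_bdd : ∃ C, ∀ u, g0 u ≤ C)
    (hG0_dens : ∀ s, G0 s = ∫ u in Iic s, g0 u)
    -- the fixed threshold t ≥ 0
    (t : ℝ) (ht : 0 ≤ t) :
    ∀ᵐ ω ∂P, Tendsto
      (fun n =>
        ⨆ β : {b : EuclideanSpace ℝ (Fin q) // ‖b - β0‖ ≤ 1},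
          ⨆ σ : Icc (σ0 / 2) (2 * σ0),
            |(∑ i ∈ Finset.range n,
                if |y i ω - f (x i ω) (β : EuclideanSpace ℝ (Fin q))| ≤ (σ : ℝ) * t
                then (1:ℝ) else 0) / n
              - ∫ ω', (if |y 0 ω' - f (x 0 ω') (β : EuclideanSpace ℝ (Fin q))| ≤ (σ : ℝ) * t
                  then (1:ℝ) else 0) ∂P|)
      atTop (nhds 0) :=
  ulln_indicator_class_nonlinear_general P x ε y hx_meas hε_meas f β0 σ0 hσ0 hmod hindep hident hεx
    G0 hG0 hG0_cont hC4_brack g0 hg0_bdd hG0_dens t ht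
end
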